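/- Suppose there are constants m > 0 and B ≥ m such that m ≤ p_Ψ(x) ≤ B for all x ∈ ℝⁿ. Define d̃(x, y) := inf of ∫₀¹ (p₀/p_Ψ(γ(t))) · ‖γ′(t)‖ dt over all C¹ paths γ : [0,1] → ℝⁿ with γ(0) = x and γ(1) = y. Then for every x, y ∈ ℝⁿ, d_λ(x, y) → d̃(x, y) as λ → 0⁺; moreover, the convergence is uniform over all pairs x, y lying in any fixed bounded subset of ℝⁿ. -/

import Mathlib

open MeasureTheory Set Filter

/-- The conformal factor `f_λ(x) := (p₀ + λ)/(p_Ψ(x) + λ)`. -/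
noncomputable def fconf {n : ℕ} (p₀ lam : ℝ) (pPsi : EuclideanSpace ℝ (Fin n) → ℝ)
    (x : EuclideanSpace ℝ (Fin n)) : ℝ :=
  (p₀ + lam) / (pPsi x + lam)

/-- The generative length of a path `γ : [0,1] → ℝⁿ`,
`L_λ(γ) := ∫₀¹ f_λ(γ(t)) ⬝ ‖γ'(t)‖ dt`. -/
noncomputable def genLength {n : ℕ} (p₀ lam : ℝ) (pPsi : EuclideanSpace ℝ (Fin n) → ℝ)
    (γ : ℝ → EuclideanSpace ℝ (Fin n)) : ℝ :=
  ∫ t in (0:ℝ)..1, fconf p₀ lam pPsi (γ t) * ‖deriv γ t‖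

/-- The generative distance `d_λ(x,y)`: the infimum of `L_λ(γ)` over all C¹ paths
`γ` with `γ 0 = x` and `γ 1 = y`. -/
noncomputable def genDist {n : ℕ} (p₀ lam : ℝ) (pPsi : EuclideanSpace ℝ (Fin n) → ℝ)
    (x y : EuclideanSpace ℝ (Fin n)) : ℝ :=
  sInf {L : ℝ | ∃ γ : ℝ → EuclideanSpace ℝ (Fin n),
    ContDiff ℝ 1 γ ∧ γ 0 = x ∧ γ 1 = y ∧ genLength p₀ lam pPsi γ = L}

/-- The limiting distance `d̃(x,y)`: infimum of `∫₀¹ (p₀/p_Ψ(γ t)) ⬝ ‖γ'(t)‖ dt` over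
C¹ paths from `x` to `y`. -/
noncomputable def dTilde {n : ℕ} (p₀ : ℝ) (pPsi : EuclideanSpace ℝ (Fin n) → ℝ)
    (x y : EuclideanSpace ℝ (Fin n)) : ℝ :=
  sInf {L : ℝ | ∃ γ : ℝ → EuclideanSpace ℝ (Fin n),
    ContDiff ℝ 1 γ ∧ γ 0 = x ∧ γ 1 = y ∧
      (∫ t in (0:ℝ)..1, (p₀ / pPsi (γ t)) * ‖deriv γ t‖) = L}

/-!
The conformal factor is squeezed pointwise between multiples of the limiting weight,
`m/(m+λ) · p₀/p_Ψ ≤ f_λ ≤ (p₀+λ)/p₀ · p₀/p_Ψ`. Both bounds pass to lengths of paths and then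
to infima, so `|d_λ(x,y) - d̃(x,y)| ≤ λ (1/p₀ + 1/m) d̃(x,y)`. Comparing with the straight
segment gives `d̃(x,y) ≤ (p₀/m) ‖x - y‖`, which is bounded on bounded sets; hence the
convergence is uniform there.
-/

section WeightedDist

variable {E : Type*} [NormedAddCommGroup E] [NormedSpace ℝ E]

noncomputable def weightedLength (w : E → ℝ) (γ : ℝ → E) : ℝ :=
  ∫ t in (0:ℝ)..1, w (γ t) * ‖deriv γ t‖

def c1Paths (x y : E) : Set (ℝ → E) :=
  {γ | ContDiff ℝ 1 γ ∧ γ 0 = x ∧ γ 1 = y}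

noncomputable def weightedDist (w : E → ℝ) (x y : E) : ℝ :=
  ⨅ γ : c1Paths x y, weightedLength w γ

variable {v w : E → ℝ} {γ : ℝ → E} {x y : E} {c K : ℝ}

theorem sInf_pathLengths_eq_iInf (ℓ : (ℝ → E) → ℝ) (x y : E) :
    sInf {L | ∃ γ : ℝ → E, ContDiff ℝ 1 γ ∧ γ 0 = x ∧ γ 1 = y ∧ ℓ γ = L} =
      ⨅ γ : c1Paths x y, ℓ γ := by
  simp only [iInf, c1Paths, Set.range, Subtype.exists, Set.mem_ofPred_eq, exists_prop, and_assoc]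

theorem weightedLength_nonneg (hw : ∀ z, 0 ≤ w z) : 0 ≤ weightedLength w γ :=
  intervalIntegral.integral_nonneg zero_le_one fun _ _ => mul_nonneg (hw _) (norm_nonneg _)

theorem weightedLength_const_mul (c : ℝ) :
    weightedLength (fun z => c * w z) γ = c * weightedLength w γ := by
  simp only [weightedLength, mul_assoc, intervalIntegral.integral_const_mul]

theorem intervalIntegrable_weight_mul_norm_deriv (hw : Continuous w) (hγ : ContDiff ℝ 1 γ) :
    IntervalIntegrable (fun t => w (γ t) * ‖deriv γ t‖) volume 0 1 :=
  ((hw.comp hγ.continuous).mul (hγ.continuous_deriv le_rfl).norm).intervalIntegrable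
    (μ := volume) 0 1

theorem weightedLength_mono (hv : Continuous v) (hw : Continuous w) (hγ : ContDiff ℝ 1 γ)
    (hvw : ∀ z, v z ≤ w z) : weightedLength v γ ≤ weightedLength w γ :=
  intervalIntegral.integral_mono_on zero_le_one (intervalIntegrable_weight_mul_norm_deriv hv hγ)
    (intervalIntegrable_weight_mul_norm_deriv hw hγ)
    fun _ _ => mul_le_mul_of_nonneg_right (hvw _) (norm_nonneg _)

theorem lineMap_mem_c1Paths (x y : E) : (AffineMap.lineMap x y : ℝ → E) ∈ c1Paths x y :=
  ⟨AffineMap.contDiff_lineMap x y, AffineMap.lineMap_apply_zero x y,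
    AffineMap.lineMap_apply_one x y⟩

theorem weightedLength_lineMap_le (hw : Continuous w) (hK : ∀ z, w z ≤ K) :
    weightedLength w (AffineMap.lineMap x y) ≤ K * dist x y :=
  calc weightedLength w (AffineMap.lineMap x y)
      ≤ weightedLength (fun _ => K) (AffineMap.lineMap x y) :=
        weightedLength_mono hw continuous_const (lineMap_mem_c1Paths x y).1 hK
    _ = K * dist x y := by
        simp [weightedLength, AffineMap.hasDerivAt_lineMap.deriv, dist_eq_norm']

theorem weightedDist_nonneg (hw : ∀ z, 0 ≤ w z) : 0 ≤ weightedDist w x y :=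
  Real.iInf_nonneg fun _ => weightedLength_nonneg hw

theorem weightedDist_mono (hv₀ : ∀ z, 0 ≤ v z) (hv : Continuous v) (hw : Continuous w)
    (hvw : ∀ z, v z ≤ w z) : weightedDist v x y ≤ weightedDist w x y :=
  ciInf_mono ⟨0, Set.forall_mem_range.2 fun _ => weightedLength_nonneg hv₀⟩
    fun γ => weightedLength_mono hv hw γ.2.1 hvw

theorem weightedDist_const_mul (hc : 0 ≤ c) :
    weightedDist (fun z => c * w z) x y = c * weightedDist w x y := by
  simp only [weightedDist, weightedLength_const_mul, Real.mul_iInf_of_nonneg hc]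

theorem weightedDist_le_mul_dist (hw₀ : ∀ z, 0 ≤ w z) (hw : Continuous w) (hK : ∀ z, w z ≤ K) :
    weightedDist w x y ≤ K * dist x y :=
  (ciInf_le ⟨0, Set.forall_mem_range.2 fun _ => weightedLength_nonneg hw₀⟩
    ⟨_, lineMap_mem_c1Paths x y⟩).trans (weightedLength_lineMap_le hw hK)

end WeightedDist

section GenerativeDistance

variable {n : ℕ} {p₀ lam m : ℝ} {pPsi : EuclideanSpace ℝ (Fin n) → ℝ}

theorem genDist_eq_weightedDist (x y : EuclideanSpace ℝ (Fin n)) :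
    genDist p₀ lam pPsi x y = weightedDist (fconf p₀ lam pPsi) x y :=
  sInf_pathLengths_eq_iInf _ x y

theorem dTilde_eq_weightedDist (x y : EuclideanSpace ℝ (Fin n)) :
    dTilde p₀ pPsi x y = weightedDist (fun z => p₀ / pPsi z) x y :=
  sInf_pathLengths_eq_iInf _ x y

theorem fconf_le {z : EuclideanSpace ℝ (Fin n)} (hp₀ : 0 < p₀) (hlam : 0 ≤ lam)
    (hz : 0 < pPsi z) : fconf p₀ lam pPsi z ≤ (p₀ + lam) / p₀ * (p₀ / pPsi z) := by
  rw [fconf, div_mul_div_cancel₀ hp₀.ne']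
  exact div_le_div_of_nonneg_left (by linarith) hz (by linarith)

theorem le_fconf {z : EuclideanSpace ℝ (Fin n)} (hp₀ : 0 ≤ p₀) (hm : 0 < m) (hlam : 0 ≤ lam)
    (hz : m ≤ pPsi z) : m / (m + lam) * (p₀ / pPsi z) ≤ fconf p₀ lam pPsi z := by
  rw [fconf, div_mul_div_comm,
    div_le_div_iff₀ (mul_pos (by linarith) (by linarith)) (by linarith)]
  nlinarith [mul_le_mul_of_nonneg_left hz (mul_nonneg hp₀ hlam),
    mul_nonneg (mul_nonneg hlam (add_nonneg hm.le hlam)) (hm.le.trans hz)]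

theorem continuous_fconf (hcont : Continuous pPsi) (hlam : 0 ≤ lam) (hpos : ∀ z, 0 < pPsi z) :
    Continuous (fconf p₀ lam pPsi) :=
  continuous_const.div (hcont.add continuous_const) fun z =>
    (add_pos_of_pos_of_nonneg (hpos z) hlam).ne'

theorem genDist_le_mul_dTilde (hp₀ : 0 < p₀) (hcont : Continuous pPsi) (hm : 0 < m)
    (hlb : ∀ z, m ≤ pPsi z) (hlam : 0 ≤ lam) (x y : EuclideanSpace ℝ (Fin n)) :
    genDist p₀ lam pPsi x y ≤ (p₀ + lam) / p₀ * dTilde p₀ pPsi x y := by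
  have hpos z : 0 < pPsi z := hm.trans_le (hlb z)
  rw [genDist_eq_weightedDist, dTilde_eq_weightedDist, ← weightedDist_const_mul (by positivity)]
  exact weightedDist_mono (fun z => by have := hpos z; rw [fconf]; positivity)
    (continuous_fconf hcont hlam hpos)
    (continuous_const.mul (continuous_const.div hcont fun z => (hpos z).ne'))
    fun z => fconf_le hp₀ hlam (hpos z)

theorem mul_dTilde_le_genDist (hp₀ : 0 < p₀) (hcont : Continuous pPsi) (hm : 0 < m)
    (hlb : ∀ z, m ≤ pPsi z) (hlam : 0 ≤ lam) (x y : EuclideanSpace ℝ (Fin n)) :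
    m / (m + lam) * dTilde p₀ pPsi x y ≤ genDist p₀ lam pPsi x y := by
  have hpos z : 0 < pPsi z := hm.trans_le (hlb z)
  rw [genDist_eq_weightedDist, dTilde_eq_weightedDist,
    ← weightedDist_const_mul (div_nonneg hm.le (by linarith))]
  exact weightedDist_mono (fun z => by have := hpos z; positivity)
    (continuous_const.mul (continuous_const.div hcont fun z => (hpos z).ne'))
    (continuous_fconf hcont hlam hpos) fun z => le_fconf hp₀.le hm hlam (hlb z)

theorem dTilde_nonneg (hp₀ : 0 ≤ p₀) (hpos : ∀ z, 0 < pPsi z) (x y : EuclideanSpace ℝ (Fin n)) :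
    0 ≤ dTilde p₀ pPsi x y := by
  rw [dTilde_eq_weightedDist]
  exact weightedDist_nonneg fun z => div_nonneg hp₀ (hpos z).le

theorem dTilde_le_mul_dist (hp₀ : 0 < p₀) (hcont : Continuous pPsi) (hm : 0 < m)
    (hlb : ∀ z, m ≤ pPsi z) (x y : EuclideanSpace ℝ (Fin n)) :
    dTilde p₀ pPsi x y ≤ p₀ / m * dist x y := by
  have hpos z : 0 < pPsi z := hm.trans_le (hlb z)
  rw [dTilde_eq_weightedDist]
  exact weightedDist_le_mul_dist (fun z => div_nonneg hp₀.le (hpos z).le)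
    (continuous_const.div hcont fun z => (hpos z).ne')
    fun z => div_le_div_of_nonneg_left hp₀.le hm (hlb z)

theorem abs_genDist_sub_dTilde_le (hp₀ : 0 < p₀) (hcont : Continuous pPsi) (hm : 0 < m)
    (hlb : ∀ z, m ≤ pPsi z) (hlam : 0 ≤ lam) (x y : EuclideanSpace ℝ (Fin n)) :
    |genDist p₀ lam pPsi x y - dTilde p₀ pPsi x y| ≤
      lam * ((1 / p₀ + 1 / m) * dTilde p₀ pPsi x y) := by
  have hd := dTilde_nonneg hp₀.le (fun z => hm.trans_le (hlb z)) x y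
  have hup := genDist_le_mul_dTilde hp₀ hcont hm hlb hlam x y
  have hlow := mul_dTilde_le_genDist hp₀ hcont hm hlb hlam x y
  have hup_factor : (p₀ + lam) / p₀ = 1 + lam * (1 / p₀) := by field_simp
  have hlow_factor : 1 - lam * (1 / m) ≤ m / (m + lam) := by
    rw [le_div_iff₀ (by linarith)]
    field_simp
    nlinarith
  have hlow' := (mul_le_mul_of_nonneg_right hlow_factor hd).trans hlow
  rw [hup_factor] at hup
  rw [abs_le]
  constructor <;> nlinarith [mul_nonneg hlam (mul_nonneg (one_div_pos.2 hp₀).le hd),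
    mul_nonneg hlam (mul_nonneg (one_div_pos.2 hm).le hd)]

end GenerativeDistance

theorem exists_pos_forall_mul_lt (K : ℝ) {ε : ℝ} (hε : 0 < ε) :
    ∃ δ : ℝ, 0 < δ ∧ ∀ t : ℝ, 0 < t → t < δ → t * K < ε := by
  refine ⟨ε / (|K| + 1), by positivity, fun t ht hlt => ?_⟩
  rw [lt_div_iff₀ (by positivity)] at hlt
  nlinarith [le_abs_self K]

theorem genDist_tendsto_dTilde_general {n : ℕ}
    (p₀ : ℝ) (hp₀ : 0 < p₀)
    (pPsi : EuclideanSpace ℝ (Fin n) → ℝ) (hcont : Continuous pPsi)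
    (m : ℝ) (hm : 0 < m)
    (hlb : ∀ x, m ≤ pPsi x) :
    (∀ x y : EuclideanSpace ℝ (Fin n),
      Tendsto (fun lam : ℝ => genDist p₀ lam pPsi x y) (nhdsWithin 0 (Ioi 0))
        (nhds (dTilde p₀ pPsi x y))) ∧
    (∀ Ω : Set (EuclideanSpace ℝ (Fin n)), Bornology.IsBounded Ω →
      ∀ ε : ℝ, 0 < ε → ∃ δ : ℝ, 0 < δ ∧ ∀ lam : ℝ, 0 < lam → lam < δ →
        ∀ x ∈ Ω, ∀ y ∈ Ω,
          |genDist p₀ lam pPsi x y - dTilde p₀ pPsi x y| < ε) := by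
  have hbound : ∀ lam, 0 < lam → ∀ x y, |genDist p₀ lam pPsi x y - dTilde p₀ pPsi x y| ≤
      lam * ((1 / p₀ + 1 / m) * (p₀ / m * dist x y)) := fun lam hlam x y =>
    (abs_genDist_sub_dTilde_le hp₀ hcont hm hlb hlam.le x y).trans <| by
      gcongr; exact dTilde_le_mul_dist hp₀ hcont hm hlb x y
  have uniform : ∀ Ω : Set (EuclideanSpace ℝ (Fin n)), Bornology.IsBounded Ω →
      ∀ ε : ℝ, 0 < ε → ∃ δ : ℝ, 0 < δ ∧ ∀ lam : ℝ, 0 < lam → lam < δ →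
        ∀ x ∈ Ω, ∀ y ∈ Ω, |genDist p₀ lam pPsi x y - dTilde p₀ pPsi x y| < ε := by
    intro Ω hΩ ε hε
    obtain ⟨D, hD⟩ := Metric.isBounded_iff.1 hΩ
    obtain ⟨δ, hδ, hlt⟩ := exists_pos_forall_mul_lt ((1 / p₀ + 1 / m) * (p₀ / m * D)) hε
    refine ⟨δ, hδ, fun lam hlam hlamδ x hx y hy => (hbound lam hlam x y).trans_lt ?_⟩
    calc lam * ((1 / p₀ + 1 / m) * (p₀ / m * dist x y))
        ≤ lam * ((1 / p₀ + 1 / m) * (p₀ / m * D)) := by gcongr; exact hD hx hy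
      _ < ε := hlt lam hlam hlamδ
  refine ⟨fun x y => Metric.tendsto_nhdsWithin_nhds.2 fun ε hε => ?_, uniform⟩
  obtain ⟨δ, hδ, hδε⟩ := uniform {x, y} (Set.toFinite _).isBounded ε hε
  refine ⟨δ, hδ, fun lam (hlam : 0 < lam) hlamδ => ?_⟩
  rw [Real.dist_eq, sub_zero, abs_of_pos hlam] at hlamδ
  exact hδε lam hlam hlamδ x (by simp) y (by simp)

/-- if `0 < m ≤ p_Ψ ≤ B`, then `d_λ(x,y) → d̃(x,y)` as `λ → 0⁺` for every
`x, y`, and the convergence is uniform over pairs `x, y` in any fixed bounded set. -/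
theorem genDist_tendsto_dTilde {n : ℕ} (hn : 1 ≤ n)
    (p₀ : ℝ) (hp₀ : 0 < p₀)
    (pPsi : EuclideanSpace ℝ (Fin n) → ℝ) (hcont : Continuous pPsi)
    (hnonneg : ∀ x, 0 ≤ pPsi x)
    (m B : ℝ) (hm : 0 < m) (hmB : m ≤ B)
    (hlb : ∀ x, m ≤ pPsi x) (hub : ∀ x, pPsi x ≤ B) :
    (∀ x y : EuclideanSpace ℝ (Fin n),
      Tendsto (fun lam : ℝ => genDist p₀ lam pPsi x y) (nhdsWithin 0 (Ioi 0))
        (nhds (dTilde p₀ pPsi x y))) ∧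
    (∀ Ω : Set (EuclideanSpace ℝ (Fin n)), Bornology.IsBounded Ω →
      ∀ ε : ℝ, 0 < ε → ∃ δ : ℝ, 0 < δ ∧ ∀ lam : ℝ, 0 < lam → lam < δ →
        ∀ x ∈ Ω, ∀ y ∈ Ω,
          |genDist p₀ lam pPsi x y - dTilde p₀ pPsi x y| < ε) :=
  genDist_tendsto_dTilde_general p₀ hp₀ pPsi hcont m hm hlb
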